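/- Let $x:[0,T]\to\mathbb{R}$ be continuous with $x_0\geq 0$ and let $k_t=\sup_{0\le s\le t}\max(-x_s,0)$. Then for every $t\in[0,T]$ with $x_t + k_t > 0$, the function $k$ is locally constant at $t$, in the sense that there is $\varepsilon>0$ such that $k$ is constant on $(t-\varepsilon, t+\varepsilon)\cap[0,T]$; equivalently, $k$ increases only on the set $\{t : x_t + k_t = 0\}$. -/

import Mathlib

open Set

/-- The Skorokhod reflector: running supremum of the negative part of `x`. -/
noncomputable def reflector (x : ℝ → ℝ) (t : ℝ) : ℝ :=
  sSup ((fun s => max (-x s) 0) '' Icc 0 t)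

lemma reflector_split (x : ℝ → ℝ) (a b : ℝ) (ha : 0 ≤ a) (hab : a ≤ b)
    (hbdd : BddAbove ((fun s => max (-x s) 0) '' Icc 0 b)) :
    reflector x b = reflector x a ⊔ sSup ((fun s => max (-x s) 0) '' Icc a b) := by
  set f : ℝ → ℝ := fun s => max (-x s) 0 with hf
  have h1 : Icc (0:ℝ) b = Icc 0 a ∪ Icc a b := (Icc_union_Icc_eq_Icc ha hab).symm
  have hb1 : BddAbove (f '' Icc 0 a) :=
    BddAbove.mono (image_mono (Icc_subset_Icc le_rfl hab)) hbdd
  have hb2 : BddAbove (f '' Icc a b) :=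
    BddAbove.mono (image_mono (Icc_subset_Icc ha le_rfl)) hbdd
  have hn1 : (f '' Icc 0 a).Nonempty := (nonempty_Icc.2 ha).image _
  have hn2 : (f '' Icc a b).Nonempty := (nonempty_Icc.2 hab).image _
  unfold reflector
  rw [h1, image_union, csSup_union hb1 hn1 hb2 hn2]

/-- Flat-off (minimality) property of the Skorokhod reflector: `k` only increases on the
set `{t : x t + k t = 0}`; i.e. wherever `x t + k t > 0`, `k` is locally constant. -/
theorem reflector_flat (T : ℝ) (hT : 0 ≤ T) (x : ℝ → ℝ)
    (hx : ContinuousOn x (Icc 0 T)) (hx0 : 0 ≤ x 0) :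
    ∀ t ∈ Icc (0:ℝ) T, 0 < x t + reflector x t →
      ∃ ε > 0, ∀ s₁ ∈ Icc 0 T ∩ Ioo (t - ε) (t + ε),
        ∀ s₂ ∈ Icc 0 T ∩ Ioo (t - ε) (t + ε),
          reflector x s₁ = reflector x s₂ := by
  set f : ℝ → ℝ := fun s => max (-x s) 0 with hfdef
  have hf : ContinuousOn f (Icc 0 T) := (continuous_neg.max continuous_const).comp_continuousOn hx
  have hbddT : BddAbove (f '' Icc 0 T) := isCompact_Icc.bddAbove_image hf
  have hbdd : ∀ u ∈ Icc (0:ℝ) T, BddAbove (f '' Icc 0 u) := fun u hu =>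
    BddAbove.mono (image_mono (Icc_subset_Icc le_rfl hu.2)) hbddT
  intro t ht hpos
  have hft : f t ≤ reflector x t :=
    le_csSup (hbdd t ht) (mem_image_of_mem _ (mem_Icc.2 ⟨ht.1, le_rfl⟩))
  -- dichotomy
  rcases lt_or_eq_of_le hft with hlt | heq
  · -- case A : f t < k t
    set c := (f t + reflector x t) / 2 with hc
    have hc1 : f t < c := by simp [hc]; linarith
    have hc2 : c < reflector x t := by simp [hc]; linarith
    have hev : ∀ᶠ s in nhdsWithin t (Icc 0 T), f s < c :=
      (hf t ht).eventually (Filter.Tendsto.eventually_lt_const hc1 Filter.tendsto_id)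
    obtain ⟨ε, hε, hball⟩ := Metric.mem_nhdsWithin_iff.1 hev
    refine ⟨ε, hε, ?_⟩
    have key : ∀ s ∈ Icc 0 T ∩ Ioo (t - ε) (t + ε), reflector x s = reflector x t := by
      intro s ⟨hs, hs'⟩
      have hdist : dist s t < ε := by
        rw [Real.dist_eq, abs_sub_lt_iff]; constructor <;> linarith [hs'.1, hs'.2]
      rcases le_total s t with hst | hts
      · -- s ≤ t
        have hsplit := reflector_split x s t hs.1 hst (hbdd t ht)
        have hsup : sSup (f '' Icc s t) < reflector x t := by
          refine lt_of_le_of_lt (csSup_le ((nonempty_Icc.2 hst).image _) ?_) hc2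
          rintro y ⟨u, hu, rfl⟩
          have hu' : u ∈ Icc (0:ℝ) T := ⟨le_trans hs.1 hu.1, le_trans hu.2 ht.2⟩
          have : dist u t < ε := by
            rw [Real.dist_eq, abs_sub_lt_iff]
            constructor <;> [linarith [hu.2]; linarith [hu.1, hs'.1]]
          exact (hball ⟨Metric.mem_ball.2 this, hu'⟩).le
        rw [hsplit] at *
        rcases max_cases (reflector x s) (sSup (f '' Icc s t)) with ⟨h1, h2⟩ | ⟨h1, h2⟩
        · exact h1.symm ▸ rfl
        · exact absurd (h1 ▸ hsup) (lt_irrefl _)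
      · -- t ≤ s
        have hsplit := reflector_split x t s ht.1 hts (hbdd s hs)
        have hsup : sSup (f '' Icc t s) ≤ c := by
          refine csSup_le ((nonempty_Icc.2 hts).image _) ?_
          rintro y ⟨u, hu, rfl⟩
          have hu' : u ∈ Icc (0:ℝ) T := ⟨le_trans ht.1 hu.1, le_trans hu.2 hs.2⟩
          have : dist u t < ε := by
            rw [Real.dist_eq, abs_sub_lt_iff]
            constructor <;> [linarith [hu.2, hs'.2]; linarith [hu.1]]
          exact (hball ⟨Metric.mem_ball.2 this, hu'⟩).le
        rw [hsplit]
        exact max_eq_left (hsup.trans hc2.le)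
    intro s1 hs1 s2 hs2
    rw [key s1 hs1, key s2 hs2]
  · -- case B : f t = k t, so k t = 0 and x t > 0
    have hxt : 0 < x t := by
      by_contra h
      push_neg at h
      have : f t = -x t := max_eq_left (by linarith)
      rw [← heq, this] at hpos; linarith
    have hft0 : f t = 0 := max_eq_right (by linarith)
    have hkt0 : reflector x t = 0 := by rw [← heq, hft0]
    have hev : ∀ᶠ s in nhdsWithin t (Icc 0 T), 0 < x s :=
      (hx t ht).eventually (Filter.Tendsto.eventually_const_lt hxt Filter.tendsto_id)
    obtain ⟨ε, hε, hball⟩ := Metric.mem_nhdsWithin_iff.1 hev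
    refine ⟨ε, hε, ?_⟩
    have key : ∀ s ∈ Icc 0 T ∩ Ioo (t - ε) (t + ε), reflector x s = 0 := by
      intro s ⟨hs, hs'⟩
      have hzero : ∀ u ∈ Icc (0:ℝ) s, f u = 0 := by
        intro u hu
        rcases le_total u t with hut | htu
        · have : f u ≤ reflector x t :=
            le_csSup (hbdd t ht) (mem_image_of_mem _ ⟨hu.1, hut⟩)
          have hfu0 : 0 ≤ f u := le_max_right _ _
          linarith [hkt0 ▸ this]
        · have hu' : u ∈ Icc (0:ℝ) T := ⟨hu.1, le_trans hu.2 hs.2⟩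
          have hd : dist u t < ε := by
            rw [Real.dist_eq, abs_sub_lt_iff]
            constructor <;> [linarith [hu.2, hs'.2]; linarith]
          have hxu : 0 < x u := hball ⟨Metric.mem_ball.2 hd, hu'⟩
          exact max_eq_right (by linarith)
      refine le_antisymm ?_ ?_
      · refine csSup_le ((nonempty_Icc.2 hs.1).image _) ?_
        rintro y ⟨u, hu, rfl⟩
        exact (hzero u hu).le
      · have : f 0 ≤ reflector x s :=
          le_csSup (hbdd s hs) (mem_image_of_mem _ (mem_Icc.2 ⟨le_rfl, hs.1⟩))
        have h0 : f 0 = 0 := max_eq_right (by linarith)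
        linarith [h0 ▸ this]
    intro s1 hs1 s2 hs2
    rw [key s1 hs1, key s2 hs2]
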